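/- Let F be a field of characteristic zero, let P ∈ F[x₁,…,xₙ,y] be a polynomial and α ∈ F be such that P(0, α) = 0 and (∂P/∂y)(0, α) ≠ 0, and let k ∈ ℕ. Let g₀, g₁, …, g_t (with t ≤ k) be the distinct elements of the set G_y(P, α, k), and let h_k ∈ F[x₁,…,xₙ] be the unique polynomial with deg(h_k) ≤ k, h_k(0) = α and H_{≤k}[P(x, h_k(x))] = 0. Then there exists a polynomial A_k ∈ F[z₀, z₁, …, z_t] of degree at most k such that h_k = H_{≤k}[A_k(g₀, g₁, …, g_t)]. -/

import Mathlib

open Polynomial MvPolynomial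
open scoped Classical

/-- `Hle k f` is `H_{≤k}[f]`, the sum of the homogeneous components of `f`
of degree at most `k`. -/
noncomputable def Hle {F : Type*} [CommSemiring F] {σ : Type*} (k : ℕ)
    (f : MvPolynomial σ F) : MvPolynomial σ F :=
  ∑ i ∈ Finset.range (k + 1), MvPolynomial.homogeneousComponent i f

/-- `G_y(P, α, d)`: the set of nonzero polynomials among
`H_{≤d}[(∂ʲP/∂yʲ)(x, α)] − H₀[(∂ʲP/∂yʲ)(x, α)]`, for `j = 0, 1, …, d`,
where `∂ʲ/∂yʲ` is the `j`-th Hasse derivative with respect to `y`. -/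
noncomputable def Gset {F : Type*} [CommRing F] {n : ℕ}
    (P : Polynomial (MvPolynomial (Fin n) F)) (α : F) (d : ℕ) :
    Finset (MvPolynomial (Fin n) F) :=
  ((Finset.range (d + 1)).image (fun j =>
      Hle d (Polynomial.eval (MvPolynomial.C α) (Polynomial.hasseDeriv j P)) -
        MvPolynomial.homogeneousComponent 0
          (Polynomial.eval (MvPolynomial.C α) (Polynomial.hasseDeriv j P)))).filter
    (fun q => q ≠ 0)

/-!
Write `h_k = α + a` with `a(0) = 0`. Then `a` is a root, modulo degree `> k`, of the Taylor
expansion `q(y) = P(x, α + y)`, whose linear coefficient has the nonzero constant term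
`c = (∂P/∂y)(0, α)`. The map `w ↦ w - q(w)/c` raises the order of vanishing at `0` of
differences, so its `k`-th iterate from `0` agrees with `a` up to degree `k`. Modulo degree `> k`,
the iterates only see the Taylor coefficients of `y`-degree `≤ k` truncated to degree `≤ k`, and
each of those is a constant plus an element of `G_y(P, α, k)`. Hence `h_k` agrees up to degree `k`
with a polynomial in the `g_i`, and truncating that polynomial to degree `k` gives `A_k`.
-/

namespace MvPolynomial

variable {R σ τ : Type*} [CommRing R]

lemma mem_idealOfVars_iff {f : MvPolynomial σ R} :
    f ∈ idealOfVars σ R ↔ constantCoeff f = 0 := by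
  rw [← pow_one (idealOfVars σ R), mem_pow_idealOfVars_iff']
  simp [Finsupp.degree_eq_zero_iff, constantCoeff_eq]

lemma aeval_mem_pow_idealOfVars {g : τ → MvPolynomial σ R} (hg : ∀ i, g i ∈ idealOfVars σ R)
    {m : ℕ} {f : MvPolynomial τ R} (hf : f ∈ idealOfVars τ R ^ m) :
    aeval g f ∈ idealOfVars σ R ^ m := by
  have hmap : (idealOfVars τ R).map (aeval g) ≤ idealOfVars σ R := by
    rw [Ideal.map_span, Ideal.span_le]
    rintro _ ⟨_, ⟨i, rfl⟩, rfl⟩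
    simpa using hg i
  have hfg := Ideal.mem_map_of_mem (aeval g) hf
  rw [Ideal.map_pow] at hfg
  exact Ideal.pow_right_mono hmap m hfg

lemma coeff_Hle (k : ℕ) (f : MvPolynomial σ R) (d : σ →₀ ℕ) :
    coeff d (Hle k f) = if d.degree ≤ k then coeff d f else 0 := by
  simp [Hle, coeff_sum, coeff_homogeneousComponent]

lemma Hle_eq_Hle_iff {k : ℕ} {f g : MvPolynomial σ R} :
    Hle k f = Hle k g ↔ f - g ∈ idealOfVars σ R ^ (k + 1) := by
  simp only [MvPolynomial.ext_iff, coeff_Hle, mem_pow_idealOfVars_iff', coeff_sub, sub_eq_zero,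
    Nat.lt_succ_iff]
  refine forall_congr' fun d => ?_
  split_ifs <;> simp [*]

lemma Hle_eq_zero_iff {k : ℕ} {f : MvPolynomial σ R} :
    Hle k f = 0 ↔ f ∈ idealOfVars σ R ^ (k + 1) := by
  simpa [Hle] using Hle_eq_Hle_iff (k := k) (f := f) (g := 0)

lemma Hle_sub_mem (k : ℕ) (f : MvPolynomial σ R) : Hle k f - f ∈ idealOfVars σ R ^ (k + 1) := by
  rw [mem_pow_idealOfVars_iff']
  intro d hd
  simp [coeff_Hle, Nat.lt_succ_iff.mp hd]

lemma totalDegree_Hle_le (k : ℕ) (f : MvPolynomial σ R) : (Hle k f).totalDegree ≤ k := by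
  refine Finset.sup_le fun d hd => ?_
  rw [mem_support_iff, coeff_Hle] at hd
  by_contra h
  exact hd (if_neg h)

lemma Hle_eq_self {k : ℕ} {f : MvPolynomial σ R} (hf : f.totalDegree ≤ k) : Hle k f = f := by
  ext d
  rw [coeff_Hle, ite_eq_left_iff, eq_comm, ← notMem_support_iff]
  exact fun hd hmem => hd ((le_totalDegree hmem).trans hf)

lemma Hle_aeval_Hle {g : τ → MvPolynomial σ R} (hg : ∀ i, g i ∈ idealOfVars σ R) (k : ℕ)
    (f : MvPolynomial τ R) : Hle k (aeval g (Hle k f)) = Hle k (aeval g f) :=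
  Hle_eq_Hle_iff.2 (by simpa using aeval_mem_pow_idealOfVars hg (Hle_sub_mem k f))

end MvPolynomial

lemma Subalgebra.mem_comap_map_mkₐ_iff {A R : Type*} [CommRing A] [CommRing R] [Algebra A R]
    {S : Subalgebra A R} {I : Ideal R} {f : R} :
    f ∈ (S.map (Ideal.Quotient.mkₐ A I)).comap (Ideal.Quotient.mkₐ A I) ↔ ∃ s ∈ S, s - f ∈ I := by
  simp [Ideal.Quotient.mkₐ_eq_mk, Ideal.Quotient.eq]

namespace Polynomial

variable {R : Type*} [CommRing R] {J : Ideal R}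

lemma eval_sub_coeff_zero_mem (q : R[X]) {w : R} (hw : w ∈ J) : q.eval w - q.coeff 0 ∈ J := by
  obtain ⟨r, hr⟩ := sub_dvd_eval_sub w 0 q
  rw [coeff_zero_eq_eval_zero, hr, sub_zero]
  exact J.mul_mem_right r hw

/-- Newton's iteration for a root of `q`, with the inverse slope frozen at `v`. -/
def chordStep (q : R[X]) (v w : R) : R := w - v * q.eval w

lemma chordStep_sub_chordStep_mem {q : R[X]} {v a b : R} {m : ℕ}
    (hv : v * q.coeff 1 - 1 ∈ J) (hb : b ∈ J) (hab : a - b ∈ J ^ (m + 1)) :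
    chordStep q v a - chordStep q v b ∈ J ^ (m + 2) := by
  obtain ⟨r, hr⟩ := q.binomExpansion b (a - b)
  rw [add_sub_cancel] at hr
  have hslope : 1 - v * q.derivative.eval b ∈ J := by
    have hd := J.mul_mem_left v (eval_sub_coeff_zero_mem q.derivative hb)
    simp only [coeff_derivative, Nat.cast_zero, zero_add, mul_one] at hd
    have e : 1 - v * q.derivative.eval b
        = -(v * q.coeff 1 - 1) - v * (q.derivative.eval b - q.coeff 1) := by
      ring
    rw [e]
    exact sub_mem (neg_mem hv) hd
  have haJ : a - b ∈ J := Ideal.pow_le_self m.succ_ne_zero hab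
  have key : chordStep q v a - chordStep q v b
      = (1 - v * q.derivative.eval b) * (a - b) - v * r * (a - b) * (a - b) := by
    simp only [chordStep]
    rw [hr]
    ring
  rw [key, pow_succ']
  exact sub_mem (Ideal.mul_mem_mul hslope hab) (Ideal.mul_mem_mul (J.mul_mem_left _ haJ) hab)

lemma sub_iterate_chordStep_mem {q : R[X]} {v a : R} {k : ℕ} (hv : v * q.coeff 1 - 1 ∈ J)
    (ha : a ∈ J) (hqa : q.eval a ∈ J ^ (k + 1)) :
    ∀ m ≤ k, a - (chordStep q v)^[m] 0 ∈ J ^ (m + 1) := by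
  intro m hm
  induction m with
  | zero => simpa using ha
  | succ m ih =>
    have hm' := ih (by omega)
    have hb : (chordStep q v)^[m] 0 ∈ J := by
      simpa using sub_mem ha (Ideal.pow_le_self m.succ_ne_zero hm')
    have hfix : a - chordStep q v a ∈ J ^ (m + 2) := by
      simpa [chordStep] using
        Ideal.pow_le_pow_right (show m + 2 ≤ k + 1 by omega) ((J ^ (k + 1)).mul_mem_left v hqa)
    rw [Function.iterate_succ_apply']
    simpa using add_mem hfix (chordStep_sub_chordStep_mem hv hb hm')

lemma eval_mem_of_coeff_mem {T : Subring R} {k : ℕ} (hJT : ((J ^ (k + 1) : Ideal R) : Set R) ⊆ T)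
    {q : R[X]} (hqT : ∀ j ≤ k, q.coeff j ∈ T) {w : R} (hwJ : w ∈ J) (hwT : w ∈ T) :
    q.eval w ∈ T := by
  rw [eval_eq_sum_range]
  refine T.sum_mem fun j _ => ?_
  by_cases hj : j ≤ k
  · exact T.mul_mem (hqT j hj) (T.pow_mem hwT j)
  · exact hJT (Ideal.mul_mem_left _ _
      (Ideal.pow_le_pow_right (show k + 1 ≤ j by omega) (Ideal.pow_mem_pow hwJ j)))

lemma mapsTo_chordStep {T : Subring R} {k : ℕ} (hJT : ((J ^ (k + 1) : Ideal R) : Set R) ⊆ T)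
    {q : R[X]} (hqT : ∀ j ≤ k, q.coeff j ∈ T) {v : R} (hvT : v ∈ T) (hq0 : q.coeff 0 ∈ J) :
    Set.MapsTo (chordStep q v) (J ∩ T) (J ∩ T) := by
  rintro w ⟨hwJ, hwT⟩
  have hqwJ : q.eval w ∈ J := by simpa using add_mem (eval_sub_coeff_zero_mem q hwJ) hq0
  exact ⟨sub_mem hwJ (J.mul_mem_left v hqwJ),
    sub_mem hwT (T.mul_mem hvT (eval_mem_of_coeff_mem hJT hqT hwJ hwT))⟩

/-- The iterates of `chordStep q v` from `0` stay in `J ∩ T` and approach `a` `J`-adically. -/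
theorem mem_of_eval_mem_pow {T : Subring R} {k : ℕ} (hJT : ((J ^ (k + 1) : Ideal R) : Set R) ⊆ T)
    {q : R[X]} (hqT : ∀ j ≤ k, q.coeff j ∈ T) {v : R} (hvT : v ∈ T)
    (hv : v * q.coeff 1 - 1 ∈ J) {a : R} (ha : a ∈ J) (hqa : q.eval a ∈ J ^ (k + 1)) :
    a ∈ T := by
  have hq0 : q.coeff 0 ∈ J := by
    simpa using sub_mem (Ideal.pow_le_self k.succ_ne_zero hqa) (eval_sub_coeff_zero_mem q ha)
  have hiter : (chordStep q v)^[k] 0 ∈ (J : Set R) ∩ T :=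
    (mapsTo_chordStep hJT hqT hvT hq0).iterate k ⟨J.zero_mem, T.zero_mem⟩
  simpa using T.add_mem (hJT (sub_iterate_chordStep_mem hv ha hqa k le_rfl)) hiter.2

end Polynomial

section Gset

variable {F : Type*} [CommRing F] {n : ℕ} (P : Polynomial (MvPolynomial (Fin n) F)) (α : F) (k : ℕ)

lemma mem_idealOfVars_of_mem_Gset {q : MvPolynomial (Fin n) F} (hq : q ∈ Gset P α k) :
    q ∈ idealOfVars (Fin n) F := by
  obtain ⟨⟨j, -, rfl⟩, -⟩ := by simpa only [Gset, Finset.mem_filter, Finset.mem_image] using hq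
  simp [mem_idealOfVars_iff, constantCoeff_eq, coeff_Hle, homogeneousComponent_zero]

lemma Hle_eval_hasseDeriv_mem {S : Subalgebra F (MvPolynomial (Fin n) F)}
    (hS : ∀ q ∈ Gset P α k, q ∈ S) {j : ℕ} (hj : j ≤ k) :
    Hle k ((hasseDeriv j P).eval (MvPolynomial.C α)) ∈ S := by
  set D := (hasseDeriv j P).eval (MvPolynomial.C α)
  have hsplit : Hle k D = algebraMap F _ (coeff 0 D) + (Hle k D - homogeneousComponent 0 D) := by
    rw [homogeneousComponent_zero, algebraMap_eq]
    ring
  rw [hsplit]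
  refine S.add_mem (S.algebraMap_mem _) ?_
  by_cases h0 : Hle k D - homogeneousComponent 0 D = 0
  · rw [h0]
    exact S.zero_mem
  · exact hS _ (Finset.mem_filter.2
      ⟨Finset.mem_image.2 ⟨j, Finset.mem_range.2 (Nat.lt_succ_of_le hj), rfl⟩, h0⟩)

end Gset

theorem exists_mem_sub_mem_pow_of_Gset_subset {F : Type*} [Field F] {n : ℕ}
    (P : Polynomial (MvPolynomial (Fin n) F)) (α : F) (k : ℕ)
    {S : Subalgebra F (MvPolynomial (Fin n) F)} (hS : ∀ q ∈ Gset P α k, q ∈ S)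
    (hder : MvPolynomial.eval 0 ((hasseDeriv 1 P).eval (MvPolynomial.C α)) ≠ 0)
    {p : MvPolynomial (Fin n) F} (hval : MvPolynomial.eval 0 p = α) (hroot : Hle k (P.eval p) = 0) :
    ∃ s ∈ S, s - p ∈ idealOfVars (Fin n) F ^ (k + 1) := by
  set J := idealOfVars (Fin n) F
  -- the polynomials that agree up to degree `k` with an element of `S`
  set T := (S.map (Ideal.Quotient.mkₐ F (J ^ (k + 1)))).comap (Ideal.Quotient.mkₐ F (J ^ (k + 1)))
  set c := MvPolynomial.eval 0 ((hasseDeriv 1 P).eval (MvPolynomial.C α))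
  rw [MvPolynomial.eval_zero] at hval
  suffices ha : p - MvPolynomial.C α ∈ T.toSubring by
    have hT : p ∈ T := by simpa using T.add_mem ha (T.algebraMap_mem α)
    exact Subalgebra.mem_comap_map_mkₐ_iff.1 hT
  refine Polynomial.mem_of_eval_mem_pow (J := J) (k := k) (q := taylor (MvPolynomial.C α) P)
    (v := MvPolynomial.C c⁻¹) ?_ ?_
    (T.algebraMap_mem c⁻¹) ?_ ?_ ?_
  · exact fun f hf => Subalgebra.mem_comap_map_mkₐ_iff.2 ⟨0, S.zero_mem, by simpa using neg_mem hf⟩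
  · intro j hj
    rw [taylor_coeff]
    exact Subalgebra.mem_comap_map_mkₐ_iff.2
      ⟨_, Hle_eval_hasseDeriv_mem P α k hS hj, Hle_sub_mem k _⟩
  · rw [mem_idealOfVars_iff, taylor_coeff, map_sub, map_mul, MvPolynomial.constantCoeff_C, map_one,
      ← MvPolynomial.eval_zero, inv_mul_cancel₀ hder, sub_self]
  · simp [J, mem_idealOfVars_iff, hval]
  · rwa [taylor_eval, sub_add_cancel, ← Hle_eq_zero_iff]

theorem approximate_root_generator_representation_general
    {F : Type*} [Field F] {n : ℕ}
    (P : Polynomial (MvPolynomial (Fin n) F)) (α : F)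
    (hder : MvPolynomial.eval (0 : Fin n → F)
        (Polynomial.eval (MvPolynomial.C α) (Polynomial.hasseDeriv 1 P)) ≠ 0)
    (k : ℕ) (t : ℕ)
    (g : Fin (t + 1) → MvPolynomial (Fin n) F)
    (hgrange : ∀ q, q ∈ Gset P α k ↔ ∃ j, g j = q)
    (hk : MvPolynomial (Fin n) F)
    (hkdeg : hk.totalDegree ≤ k)
    (hkval : MvPolynomial.eval (0 : Fin n → F) hk = α)
    (hkroot : Hle k (Polynomial.eval hk P) = 0) :
    ∃ A : MvPolynomial (Fin (t + 1)) F, A.totalDegree ≤ k ∧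
      hk = Hle k (MvPolynomial.aeval g A) := by
  have hgJ : ∀ i, g i ∈ idealOfVars (Fin n) F :=
    fun i => mem_idealOfVars_of_mem_Gset P α k ((hgrange (g i)).2 ⟨i, rfl⟩)
  have hGS : ∀ q ∈ Gset P α k, q ∈ (MvPolynomial.aeval (R := F) g).range := fun q hq => by
    obtain ⟨i, rfl⟩ := (hgrange q).1 hq
    exact ⟨MvPolynomial.X i, aeval_X g i⟩
  obtain ⟨_, ⟨W, rfl⟩, hW⟩ :=
    exists_mem_sub_mem_pow_of_Gset_subset P α k hGS hder hkval hkroot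
  change MvPolynomial.aeval g W - hk ∈ _ at hW
  refine ⟨Hle k W, totalDegree_Hle_le k W, ?_⟩
  rw [Hle_aeval_Hle hgJ, Hle_eq_Hle_iff.2 hW, Hle_eq_self hkdeg]

/-- If `P(0, α) = 0`, `(∂P/∂y)(0, α) ≠ 0`, `g₀, …, g_t` (`t ≤ k`) are the
distinct elements of `G_y(P, α, k)` and `h_k` is the unique polynomial of
degree at most `k` with `h_k(0) = α` and `H_{≤k}[P(x, h_k(x))] = 0`, then
there is a polynomial `A_k` in `t+1` variables of degree at most `k` with
`h_k = H_{≤k}[A_k(g₀, …, g_t)]`. -/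
theorem approximate_root_generator_representation
    {F : Type*} [Field F] [CharZero F] {n : ℕ}
    (P : Polynomial (MvPolynomial (Fin n) F)) (α : F)
    (hval : MvPolynomial.eval (0 : Fin n → F)
        (Polynomial.eval (MvPolynomial.C α) P) = 0)
    (hder : MvPolynomial.eval (0 : Fin n → F)
        (Polynomial.eval (MvPolynomial.C α) (Polynomial.hasseDeriv 1 P)) ≠ 0)
    (k : ℕ) (t : ℕ) (ht : t ≤ k)
    (g : Fin (t + 1) → MvPolynomial (Fin n) F)
    (hginj : Function.Injective g)
    (hgrange : ∀ q, q ∈ Gset P α k ↔ ∃ j, g j = q)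
    (hk : MvPolynomial (Fin n) F)
    (hkdeg : hk.totalDegree ≤ k)
    (hkval : MvPolynomial.eval (0 : Fin n → F) hk = α)
    (hkroot : Hle k (Polynomial.eval hk P) = 0) :
    ∃ A : MvPolynomial (Fin (t + 1)) F, A.totalDegree ≤ k ∧
      hk = Hle k (MvPolynomial.aeval g A) :=
  approximate_root_generator_representation_general P α hder k t g hgrange hk hkdeg hkval hkroot
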